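/- Let A be a commutative Noetherian local ring with residue field k, M a finitely generated A-module, and d a natural number. Then injdim M ≤ d if and only if Ext^n_A(A/p, M) = 0 for all primes p ∈ Spec A and all n > d. -/

import Mathlib

/-!
By Baer's criterion, `M` is injective as soon as `Ext¹(A ⧸ I, M) = 0` for every ideal `I`, and
embedding `M` into an injective module `E` shifts degrees: `Extⁿ(-, E ⧸ M) ≅ Extⁿ⁺¹(-, M)` for
`n ≥ 1`. By induction on `d`, `injdim M ≤ d` as soon as `Extⁿ(A ⧸ I, M) = 0` for all ideals `I`
and all `n > d`. Over a Noetherian ring every finitely generated module, in particular every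
`A ⧸ I`, has a finite filtration with subquotients `A ⧸ p`, `p` prime, so by the long exact
sequence it suffices to test `A ⧸ p`.

The classical `Ext` (derived functors of `Hom`) and `Abelian.Ext` (morphisms in the derived
category) vanish together in positive degrees: both vanish exactly when every cocycle on a
projective resolution is a coboundary.
-/

open CategoryTheory

/-- The `n`-th Ext group of `M` and `N` over `R`. -/
noncomputable def extModule (R : Type) [CommRing R] (M N : ModuleCat R) (n : ℕ) :
    ModuleCat R :=
  ((Ext R (ModuleCat R) n).obj (Opposite.op M)).obj N

/-- Injective dimension: the least `n` such that `Ext^i(-, M)` vanishes for all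
`i > n`. -/
noncomputable def injDim (R : Type) [CommRing R] (M : ModuleCat R) : ℕ∞ :=
  sInf {n : ℕ∞ | ∀ (N : ModuleCat R) (i : ℕ), n < (i : ℕ∞) →
    Subsingleton (extModule R N M i)}

universe w u

namespace CategoryTheory

variable {C : Type*} [Category* C] [Abelian C]

namespace ProjectiveResolution

variable {X : C} (P : ProjectiveResolution X) (Y : C) (n : ℕ)

theorem subsingleton_ext_succ_iff {R : Type*} [Ring R] [Linear R C] [EnoughProjectives C] :
    Subsingleton (((Ext R C (n + 1)).obj (Opposite.op X)).obj Y) ↔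
      ∀ f : P.complex.X (n + 1) ⟶ Y, P.complex.d (n + 2) (n + 1) ≫ f = 0 →
        ∃ g : P.complex.X n ⟶ Y, P.complex.d (n + 1) n ≫ g = f := by
  rw [← ModuleCat.isZero_iff_subsingleton, (P.isoExt (n + 1) Y).isZero_iff,
    ← HomologicalComplex.exactAt_iff_isZero_homology,
    HomologicalComplex.exactAt_iff' _ n (n + 1) (n + 2) (by simp) (by simp),
    ShortComplex.moduleCat_exact_iff]
  rfl

theorem subsingleton_abelianExt_succ_iff [HasExt.{w} C] :
    Subsingleton (Abelian.Ext X Y (n + 1)) ↔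
      ∀ f : P.complex.X (n + 1) ⟶ Y, P.complex.d (n + 2) (n + 1) ≫ f = 0 →
        ∃ g : P.complex.X n ⟶ Y, P.complex.d (n + 1) n ≫ g = f := by
  refine ⟨fun _ f hf ↦ (P.extMk_eq_zero_iff f (n + 2) rfl hf n rfl).mp (Subsingleton.elim _ _),
    fun h ↦ subsingleton_of_forall_eq 0 fun e ↦ ?_⟩
  obtain ⟨f, hf, rfl⟩ := P.extMk_surjective e (n + 2) rfl
  exact (P.extMk_eq_zero_iff f (n + 2) rfl hf n rfl).mpr (h f hf)

end ProjectiveResolution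

theorem subsingleton_ext_succ_iff_subsingleton_abelianExt {R : Type*} [Ring R] [Linear R C]
    [EnoughProjectives C] [HasExt.{w} C] (X Y : C) (n : ℕ) :
    Subsingleton (((Ext R C (n + 1)).obj (Opposite.op X)).obj Y) ↔
      Subsingleton (Abelian.Ext X Y (n + 1)) :=
  let P := ProjectiveResolution.of X
  (P.subsingleton_ext_succ_iff Y n).trans (P.subsingleton_abelianExt_succ_iff Y n).symm

variable [HasExt.{w} C]

theorem Abelian.Ext.subsingleton_of_iso {X X' : C} (e : X ≅ X') (Y : C) (n : ℕ)
    [Subsingleton (Abelian.Ext X' Y n)] : Subsingleton (Abelian.Ext X Y n) :=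
  Function.LeftInverse.injective
    (f := fun a : Abelian.Ext X Y n ↦ (Abelian.Ext.mk₀ e.inv).comp a (zero_add n))
    (g := fun b ↦ (Abelian.Ext.mk₀ e.hom).comp b (zero_add n))
    (fun a ↦ by simp [Abelian.Ext.mk₀_comp_mk₀_assoc]) |>.subsingleton

theorem ShortComplex.ShortExact.subsingleton_abelianExt_X₃ {S : ShortComplex C}
    (hS : S.ShortExact) [Injective S.X₂] (X : C) (n : ℕ)
    [Subsingleton (Abelian.Ext X S.X₁ (n + 2))] :
    Subsingleton (Abelian.Ext X S.X₃ (n + 1)) := by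
  refine subsingleton_of_forall_eq 0 fun x₃ ↦ ?_
  obtain ⟨x₂, rfl⟩ := Abelian.Ext.covariant_sequence_exact₃ X hS x₃ rfl (Subsingleton.elim _ _)
  rw [x₂.eq_zero_of_injective, Abelian.Ext.zero_comp]

end CategoryTheory

section Module

variable {A : Type u} [CommRing A]

theorem Module.Baer.of_subsingleton_abelianExt_one (M : ModuleCat.{u} A)
    (h : ∀ I : Ideal A, Subsingleton (Abelian.Ext (ModuleCat.of A (A ⧸ I)) M 1)) :
    Module.Baer A M := by
  intro I g
  have := h I
  let S := ModuleCat.shortComplexOfCompEqZero I.subtype I.mkQ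
    (LinearMap.exact_subtype_mkQ I).linearMap_comp_eq_zero
  have hS : S.ShortExact := ModuleCat.shortComplex_shortExact S (LinearMap.exact_subtype_mkQ I)
    I.injective_subtype I.mkQ_surjective
  obtain ⟨φ, hφ⟩ := Abelian.Ext.contravariant_sequence_exact₁ hS M
    (Abelian.Ext.mk₀ (ModuleCat.ofHom g)) (add_zero 1) (Subsingleton.elim _ _)
  obtain ⟨φ, rfl⟩ := Abelian.Ext.homEquiv₀.symm.surjective φ
  have hφ' : S.f ≫ φ = ModuleCat.ofHom g :=
    Abelian.Ext.homEquiv₀.symm.injective (by simpa using hφ)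
  exact ⟨φ.hom, fun x hx ↦ congr($hφ' ⟨x, hx⟩)⟩

theorem hasInjectiveDimensionLE_of_subsingleton_abelianExt_quotient (d : ℕ)
    (M : ModuleCat.{u} A)
    (h : ∀ (I : Ideal A) (n : ℕ), d < n →
      Subsingleton (Abelian.Ext (ModuleCat.of A (A ⧸ I)) M n)) :
    HasInjectiveDimensionLE M d := by
  induction d generalizing M with
  | zero =>
    have : Module.Injective A M :=
      (Module.Baer.of_subsingleton_abelianExt_one M fun I ↦ h I 1 Nat.one_pos).injective
    exact injective_iff_hasInjectiveDimensionLT_one.mp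
      (Module.injective_object_of_injective_module A M)
  | succ d ih =>
    obtain ⟨E, _, f, _⟩ := EnoughInjectives.presentation M
    let S := ShortComplex.mk f (Limits.cokernel.π f) (Limits.cokernel.condition f)
    have hS : S.ShortExact := { exact := ShortComplex.exact_cokernel f }
    refine (hS.hasInjectiveDimensionLT_X₃_iff d ‹_›).mp (ih S.X₃ fun I n hn ↦ ?_)
    obtain ⟨m, rfl⟩ := Nat.exists_eq_add_of_lt hn
    have := h I (d + m + 2) (by omega)
    exact hS.subsingleton_abelianExt_X₃ _ (d + m)

theorem subsingleton_abelianExt_of_finite [IsNoetherianRing A] (M : ModuleCat.{u} A) (d : ℕ)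
    (h : ∀ p : Ideal A, p.IsPrime → ∀ n : ℕ, d < n →
      Subsingleton (Abelian.Ext (ModuleCat.of A (A ⧸ p)) M n))
    (N : Type u) [AddCommGroup N] [Module A N] [Module.Finite A N] (n : ℕ) (hn : d < n) :
    Subsingleton (Abelian.Ext (ModuleCat.of A N) M n) := by
  induction ‹Module.Finite A N›
    using IsNoetherianRing.induction_on_isQuotientEquivQuotientPrime A with
  | subsingleton N =>
    have := (ModuleCat.isZero_of_subsingleton (ModuleCat.of A N)).hasProjectiveDimensionLT_zero
    exact HasProjectiveDimensionLT.subsingleton _ 0 n (Nat.zero_le n) M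
  | quotient N p e =>
    have := h p.1 p.2 n hn
    exact Abelian.Ext.subsingleton_of_iso e.toModuleIso M n
  | exact N₁ N₂ N₃ f g hf hg hfg h₁ h₃ =>
    let S := ModuleCat.shortComplexOfCompEqZero f g hfg.linearMap_comp_eq_zero
    have hS : S.ShortExact := ModuleCat.shortComplex_shortExact S hfg hf hg
    refine subsingleton_of_forall_eq 0 fun x₂ ↦ ?_
    obtain ⟨x₃, rfl⟩ := Abelian.Ext.contravariant_sequence_exact₂ hS M x₂ (Subsingleton.elim _ _)
    rw [Subsingleton.elim x₃ 0, Abelian.Ext.comp_zero]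

theorem hasInjectiveDimensionLE_iff_forall_subsingleton_abelianExt_quotient_prime
    [IsNoetherianRing A] (M : ModuleCat.{u} A) (d : ℕ) :
    HasInjectiveDimensionLE M d ↔ ∀ p : Ideal A, p.IsPrime → ∀ n : ℕ, d < n →
      Subsingleton (Abelian.Ext (ModuleCat.of A (A ⧸ p)) M n) :=
  ⟨fun _ _ _ n hn ↦ HasInjectiveDimensionLT.subsingleton M (d + 1) n hn _,
    fun h ↦ hasInjectiveDimensionLE_of_subsingleton_abelianExt_quotient d M
      fun I ↦ subsingleton_abelianExt_of_finite M d h (A ⧸ I)⟩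

end Module

section InjDim

variable {R : Type} [CommRing R]

theorem subsingleton_extModule_iff (N M : ModuleCat R) {n : ℕ} (hn : n ≠ 0) :
    Subsingleton (extModule R N M n) ↔ Subsingleton (Abelian.Ext N M n) := by
  obtain ⟨m, rfl⟩ := Nat.exists_eq_succ_of_ne_zero hn
  exact subsingleton_ext_succ_iff_subsingleton_abelianExt N M m

theorem injDim_le_iff (M : ModuleCat R) (d : ℕ) :
    injDim R M ≤ d ↔ ∀ (N : ModuleCat R) (i : ℕ), d < i → Subsingleton (extModule R N M i) := by
  refine ⟨fun hle N i hi ↦ ?_, fun h ↦ sInf_le fun N i hi ↦ h N i (by exact_mod_cast hi)⟩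
  have hne : {n : ℕ∞ | ∀ (N : ModuleCat R) (i : ℕ), n < i →
      Subsingleton (extModule R N M i)}.Nonempty :=
    Set.nonempty_iff_ne_empty.mpr fun hempty ↦ by simp [injDim, hempty] at hle
  exact csInf_mem hne N i (lt_of_le_of_lt hle (by exact_mod_cast hi))

theorem injDim_le_iff_hasInjectiveDimensionLE (M : ModuleCat R) (d : ℕ) :
    injDim R M ≤ d ↔ HasInjectiveDimensionLE M d := by
  rw [injDim_le_iff]
  refine ⟨fun h ↦ HasInjectiveDimensionLT.mk fun i hi N e ↦ ?_, fun _ N i hi ↦ ?_⟩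
  · have := (subsingleton_extModule_iff N M (by omega)).mp (h N i hi)
    exact Subsingleton.elim e 0
  · exact (subsingleton_extModule_iff N M (by omega)).mpr
      (HasInjectiveDimensionLT.subsingleton M (d + 1) i hi N)

end InjDim

theorem stmt10_general (A : Type) [CommRing A] [IsNoetherianRing A]
    (M : Type) [AddCommGroup M] [Module A M] (d : ℕ) :
    injDim A (ModuleCat.of A M) ≤ (d : ℕ∞) ↔
      ∀ (p : Ideal A), p.IsPrime → ∀ n : ℕ, d < n →
        Subsingleton (extModule A (ModuleCat.of A (A ⧸ p)) (ModuleCat.of A M) n) := by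
  rw [injDim_le_iff_hasInjectiveDimensionLE,
    hasInjectiveDimensionLE_iff_forall_subsingleton_abelianExt_quotient_prime]
  exact forall₂_congr fun p _ ↦ forall₂_congr fun n hn ↦
    (subsingleton_extModule_iff _ _ (by omega)).symm

/-- For a finitely generated module `M` over a commutative Noetherian local ring,
`injdim M ≤ d` iff `Ext^n(A/p, M) = 0` for all primes `p` and all `n > d`. -/
theorem stmt10 (A : Type) [CommRing A] [IsNoetherianRing A] [IsLocalRing A]
    (M : Type) [AddCommGroup M] [Module A M] [Module.Finite A M] (d : ℕ) :
    injDim A (ModuleCat.of A M) ≤ (d : ℕ∞) ↔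
      ∀ (p : Ideal A), p.IsPrime → ∀ n : ℕ, d < n →
        Subsingleton (extModule A (ModuleCat.of A (A ⧸ p)) (ModuleCat.of A M) n) :=
  stmt10_general A M d
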